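/- arXiv:1807.09159 — 3 statements merged into one kernel-verified Lean document; each statement's English description precedes it below -/
import Mathlib

section
/- Let μ > 1, C > 0, let (δ_n)_{n≥0} be a sequence of nonnegative real numbers with Σ_{n=0}^∞ δ_n² < ∞, and let (a_n)_{n≥0} be a sequence of nonnegative real numbers such that a_n ≤ μ^{-1} a_{n−1} + C δ_n for all n ≥ 1. Then Σ_{n=0}^∞ a_n² < ∞. -/
/-- Let `μ > 1`, `C > 0`, `(δ_n)_{n≥0}` nonnegative with `Σ δ_n² < ∞`,
and `(a_n)_{n≥0}` nonnegative with `a_n ≤ μ⁻¹ a_{n−1} + C δ_n` for all `n ≥ 1`.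
Then `Σ_{n=0}^∞ a_n² < ∞`. -/
theorem stmt10 (μ C : ℝ) (hμ : 1 < μ) (hC : 0 < C)
    (a δ : ℕ → ℝ) (ha : ∀ n, 0 ≤ a n) (hδ : ∀ n, 0 ≤ δ n)
    (hδ2 : Summable fun n : ℕ => δ n ^ 2)
    (hrec : ∀ n, a (n + 1) ≤ μ⁻¹ * a n + C * δ (n + 1)) :
    Summable fun n : ℕ => a n ^ 2 := by
  have hμ0 : (0:ℝ) < μ := lt_trans one_pos hμ
  set e : ℝ := (μ^2 - 1) / 2 with he_def
  have he : 0 < e := by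
    have : 1 < μ^2 := by nlinarith
    simp only [he_def]; linarith
  set r : ℝ := (1 + e) * μ⁻¹ ^ 2 with hr_def
  have hr0 : 0 ≤ r := by positivity
  have hr1 : r < 1 := by
    have hμ2 : (0:ℝ) < μ^2 := by positivity
    have h1 : 1 + e < μ^2 := by simp only [he_def]; nlinarith
    have : (1 + e) * μ⁻¹ ^ 2 = (1 + e) / μ^2 := by
      rw [inv_pow]; ring
    rw [hr_def, this, div_lt_one hμ2]; exact h1
  set K : ℝ := (1 + e⁻¹) * C^2 with hK_def
  have hK0 : 0 ≤ K := by positivity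
  set D : ℝ := ∑' n, δ n ^ 2 with hD_def
  have hD0 : 0 ≤ D := tsum_nonneg (fun n => sq_nonneg _)
  -- key pointwise inequality
  have key : ∀ n, a (n+1) ^ 2 ≤ r * a n ^ 2 + K * δ (n+1) ^ 2 := by
    intro n
    have h1 : a (n+1) ^ 2 ≤ (μ⁻¹ * a n + C * δ (n+1)) ^ 2 := by
      apply pow_le_pow_left₀ (ha _) (hrec n)
    have h2 : (μ⁻¹ * a n + C * δ (n+1)) ^ 2 ≤
        (1 + e) * (μ⁻¹ * a n)^2 + (1 + e⁻¹) * (C * δ (n+1))^2 := by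
      have hee : e * e⁻¹ = 1 := mul_inv_cancel₀ (ne_of_gt he)
      nlinarith [sq_nonneg (e * (μ⁻¹ * a n) - C * δ (n+1)), he,
        mul_pos he he, sq_nonneg (μ⁻¹ * a n + C * δ (n+1))]
    calc a (n+1) ^ 2 ≤ (1 + e) * (μ⁻¹ * a n)^2 + (1 + e⁻¹) * (C * δ (n+1))^2 :=
          le_trans h1 h2
      _ = r * a n ^ 2 + K * δ (n+1) ^ 2 := by rw [hr_def, hK_def]; ring
  have hδ2' : Summable fun n : ℕ => δ (n+1) ^ 2 := by
    exact (summable_nat_add_iff 1).2 hδ2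
  have hDshift : ∑' n : ℕ, δ (n+1) ^ 2 ≤ D := by
    have := (Summable.sum_add_tsum_nat_add (f := fun n => δ n ^ 2) 1 hδ2).symm
    have h0 : 0 ≤ ∑ i ∈ Finset.range 1, δ i ^ 2 := by positivity
    rw [hD_def]
    linarith [this]
  set B : ℝ := (a 0 ^ 2 + K * D) / (1 - r) with hB_def
  have h1r : 0 < 1 - r := by linarith
  apply summable_of_sum_range_le (c := B) (fun n => sq_nonneg _)
  intro N
  match N with
  | 0 => simp [hB_def]; positivity
  | (M+1) =>
    set S : ℕ → ℝ := fun N => ∑ n ∈ Finset.range N, a n ^ 2 with hS_def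
    have hstep : S (M+1) = a 0 ^ 2 + ∑ n ∈ Finset.range M, a (n+1) ^ 2 := by
      rw [hS_def]; simp [Finset.sum_range_succ']; ring
    have hsum_le : ∑ n ∈ Finset.range M, a (n+1) ^ 2 ≤ r * S M + K * D := by
      calc ∑ n ∈ Finset.range M, a (n+1) ^ 2
          ≤ ∑ n ∈ Finset.range M, (r * a n ^ 2 + K * δ (n+1) ^ 2) :=
            Finset.sum_le_sum (fun n _ => key n)
        _ = r * S M + K * ∑ n ∈ Finset.range M, δ (n+1) ^ 2 := by
            rw [Finset.sum_add_distrib, ← Finset.mul_sum, ← Finset.mul_sum]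
        _ ≤ r * S M + K * D := by
            have h1 : ∑ n ∈ Finset.range M, δ (n+1) ^ 2 ≤ ∑' n : ℕ, δ (n+1) ^ 2 :=
              Summable.sum_le_tsum _ (fun n _ => sq_nonneg _) hδ2'
            have h2 := le_trans h1 hDshift
            have := mul_le_mul_of_nonneg_left h2 hK0
            linarith
    have hmono : S M ≤ S (M+1) := by
      rw [hS_def]; simp [Finset.sum_range_succ]
      linarith [sq_nonneg (a M)]
    have hr' : r * S M ≤ r * S (M+1) := mul_le_mul_of_nonneg_left hmono hr0
    have hineq : S (M+1) ≤ a 0 ^ 2 + r * S (M+1) + K * D := by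
      linarith [hstep, hsum_le, hr']
    show S (M+1) ≤ B
    rw [hB_def, le_div_iff₀ h1r]
    linarith
end

section
/- Let μ > 1, C > 0, let (δ_n)_{n≥0} be a sequence of nonnegative real numbers with Σ_{n=0}^∞ δ_n² < ∞, and let (a_n)_{n≥0} be a uniformly bounded sequence of nonnegative real numbers such that a_{n+1} ≥ μ a_n − C δ_n for all n ≥ 0. Then Σ_{n=0}^∞ a_n² < ∞. -/
/-- Let `μ > 1`, `C > 0`, `(δ_n)_{n≥0}` nonnegative with `Σ δ_n² < ∞`,
and `(a_n)_{n≥0}` a uniformly bounded nonnegative sequence with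
`a_{n+1} ≥ μ a_n − C δ_n` for all `n ≥ 0`.  Then `Σ_{n=0}^∞ a_n² < ∞`. -/
theorem stmt12 (μ C : ℝ) (hμ : 1 < μ) (hC : 0 < C)
    (a δ : ℕ → ℝ) (ha : ∀ n, 0 ≤ a n) (hδ : ∀ n, 0 ≤ δ n)
    (hδ2 : Summable fun n : ℕ => δ n ^ 2)
    (hbd : ∃ M : ℝ, ∀ n, a n ≤ M)
    (hrec : ∀ n, μ * a n - C * δ n ≤ a (n + 1)) :
    Summable fun n : ℕ => a n ^ 2 := by
  obtain ⟨M, hM⟩ := hbd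
  have hM0 : 0 ≤ M := le_trans (ha 0) (hM 0)
  set T := ∑' n, δ n ^ 2 with hT
  have hT0 : 0 ≤ T := tsum_nonneg fun n => sq_nonneg _
  have hμ0 : 0 < μ := lt_trans one_pos hμ
  have hμ2 : 0 < μ ^ 2 - 1 := by nlinarith
  have key : ∀ n, 2 * (μ ^ 2 - 1) * (μ ^ 2 * a n ^ 2) ≤
      (μ ^ 4 - 1) * a (n + 1) ^ 2 + 2 * (μ ^ 2 + 1) * (C ^ 2 * δ n ^ 2) := by
    intro n
    have h2 : μ * a n ≤ a (n + 1) + C * δ n := by linarith [hrec n]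
    have h0 : 0 ≤ μ * a n := mul_nonneg hμ0.le (ha n)
    have h1 : (μ * a n) ^ 2 ≤ (a (n + 1) + C * δ n) ^ 2 := by
      have := mul_self_le_mul_self h0 h2
      nlinarith [this]
    nlinarith [sq_nonneg ((μ ^ 2 - 1) * a (n + 1) - 2 * C * δ n), h1, hμ2,
      sq_nonneg (a (n + 1)), sq_nonneg (δ n)]
  apply summable_of_sum_range_le
    (c := ((μ ^ 4 - 1) * M ^ 2 + 2 * (μ ^ 2 + 1) * (C ^ 2 * T)) / ((μ ^ 2 - 1) ^ 2))
    (fun n => sq_nonneg _)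
  intro N
  set S := ∑ i ∈ Finset.range N, a i ^ 2 with hS
  have hstep : ∑ i ∈ Finset.range N, (2 * (μ ^ 2 - 1) * (μ ^ 2 * a i ^ 2)) ≤
      ∑ i ∈ Finset.range N, ((μ ^ 4 - 1) * a (i + 1) ^ 2 + 2 * (μ ^ 2 + 1) * (C ^ 2 * δ i ^ 2)) :=
    Finset.sum_le_sum fun i _ => key i
  have hL : ∑ i ∈ Finset.range N, (2 * (μ ^ 2 - 1) * (μ ^ 2 * a i ^ 2)) =
      2 * (μ ^ 2 - 1) * (μ ^ 2 * S) := by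
    simp only [hS, Finset.mul_sum]
  have hshift : ∑ i ∈ Finset.range N, a (i + 1) ^ 2 ≤ S + M ^ 2 := by
    have h1 : ∑ i ∈ Finset.range (N + 1), a i ^ 2 =
        (∑ i ∈ Finset.range N, a (i + 1) ^ 2) + a 0 ^ 2 := Finset.sum_range_succ' _ _
    have h2 : ∑ i ∈ Finset.range (N + 1), a i ^ 2 = S + a N ^ 2 := Finset.sum_range_succ _ _
    have h3 : a N ^ 2 ≤ M ^ 2 := by nlinarith [ha N, hM N]
    nlinarith [sq_nonneg (a 0)]
  have hdelta : ∑ i ∈ Finset.range N, δ i ^ 2 ≤ T :=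
    Summable.sum_le_tsum _ (fun i _ => sq_nonneg _) hδ2
  have hR : ∑ i ∈ Finset.range N, ((μ ^ 4 - 1) * a (i + 1) ^ 2 + 2 * (μ ^ 2 + 1) * (C ^ 2 * δ i ^ 2)) ≤
      (μ ^ 4 - 1) * (S + M ^ 2) + 2 * (μ ^ 2 + 1) * (C ^ 2 * T) := by
    rw [Finset.sum_add_distrib]
    have e1 : ∑ i ∈ Finset.range N, (μ ^ 4 - 1) * a (i + 1) ^ 2 =
        (μ ^ 4 - 1) * ∑ i ∈ Finset.range N, a (i + 1) ^ 2 := by rw [Finset.mul_sum]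
    have e2 : ∑ i ∈ Finset.range N, 2 * (μ ^ 2 + 1) * (C ^ 2 * δ i ^ 2) =
        2 * (μ ^ 2 + 1) * C ^ 2 * ∑ i ∈ Finset.range N, δ i ^ 2 := by
      simp only [Finset.mul_sum]; refine Finset.sum_congr rfl fun i _ => by ring
    rw [e1, e2]
    have hμ4 : 0 ≤ μ ^ 4 - 1 := by nlinarith
    have := mul_le_mul_of_nonneg_left hshift hμ4
    have h2 := mul_le_mul_of_nonneg_left hdelta (by positivity : (0:ℝ) ≤ 2 * (μ ^ 2 + 1) * C ^ 2)
    nlinarith [this, h2]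
  have hmain : 2 * (μ ^ 2 - 1) * (μ ^ 2 * S) ≤
      (μ ^ 4 - 1) * (S + M ^ 2) + 2 * (μ ^ 2 + 1) * (C ^ 2 * T) := by
    calc 2 * (μ ^ 2 - 1) * (μ ^ 2 * S) = _ := hL.symm
    _ ≤ _ := hstep
    _ ≤ _ := hR
  rw [le_div_iff₀ (by positivity)]
  nlinarith [hmain]
end

section
/- Let 𝒜 be a finite alphabet with d ≥ 2 symbols and let π = (π₀, π₁) be a combinatorial data on 𝒜 of genus one. Then the matrix Ω_π has rank 2; equivalently, the kernel of Ω_π (as a linear map ℝ^𝒜 → ℝ^𝒜) has dimension d − 2 and its image has dimension 2. -/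
/-!
Write `p₁(α) = p₀(α) + k mod d` and let `w` be the indicator of the letters with
`p₀(α) ≥ d - k`, i.e. those whose position wraps around under the shift. Comparing
positions shows `(Ω_π)_{αβ} = w β - w α`, so `Ω_π = 𝟙 wᵀ - w 𝟙ᵀ`. Since `1 ≤ k < d`,
`w` is not constant, hence `𝟙` and `w` are linearly independent, and a matrix
`u vᵀ - v uᵀ` with `u, v` independent has image exactly `span {u, v}`.
-/

open Matrix

/-- The matrix `Ω_π` associated to the combinatorial data `π = (p0, p1)`.
Here the values of `p0, p1` lie in `Fin d`, identified order-preservingly with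
`{1, …, d}`. -/
def rvOmega {A : Type*} [Fintype A] (d : ℕ) (p0 p1 : A ≃ Fin d) :
    Matrix A A ℝ :=
  Matrix.of fun α β =>
    if p1 β < p1 α ∧ p0 α < p0 β then (1 : ℝ)
    else if p1 α < p1 β ∧ p0 β < p0 α then -1
    else 0

open Fin.NatCast

/-- `π = (p0, p1)` has genus one: the monodromy invariant `p = p1 ∘ p0⁻¹` is a
nontrivial cyclic shift `i ↦ i + k (mod d)` for some `1 ≤ k ≤ d − 1`. -/
def rvGenusOne {A : Type*} (d : ℕ) (hd : 0 < d) (p0 p1 : A ≃ Fin d) : Prop :=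
  haveI : NeZero d := ⟨hd.ne'⟩
  ∃ k : ℕ, 1 ≤ k ∧ k ≤ d - 1 ∧ ∀ i : Fin d, p1 (p0.symm i) = i + (k : Fin d)

namespace Matrix

variable {K n : Type*} [Field K] [Fintype n]

theorem vecMulVec_sub_vecMulVec_mulVec (u v x : n → K) :
    (vecMulVec u v - vecMulVec v u) *ᵥ x = (v ⬝ᵥ x) • u - (u ⬝ᵥ x) • v := by
  ext i
  simp [sub_mulVec, vecMulVec_mulVec, mul_comm]

theorem exists_dotProduct_eq_of_linearIndependent {u v : n → K}
    (h : LinearIndependent K ![u, v]) (a b : K) : ∃ x, u ⬝ᵥ x = a ∧ v ⬝ᵥ x = b := by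
  set M : Matrix (Fin 2) n K := Matrix.of ![u, v]
  have hrank :
      Module.finrank K (LinearMap.range M.mulVecLin) = Module.finrank K (Fin 2 → K) := by
    rw [Module.finrank_fin_fun, ← Matrix.rank, LinearIndependent.rank_matrix (M := M) h,
      Fintype.card_fin]
  obtain ⟨x, hx⟩ : ![a, b] ∈ LinearMap.range M.mulVecLin := by
    rw [Submodule.eq_top_of_finrank_eq hrank]
    exact Submodule.mem_top
  exact ⟨x, congrFun hx 0, congrFun hx 1⟩

theorem range_mulVecLin_vecMulVec_sub_vecMulVec {u v : n → K}
    (h : LinearIndependent K ![u, v]) :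
    LinearMap.range (vecMulVec u v - vecMulVec v u).mulVecLin =
      Submodule.span K (Set.range ![u, v]) := by
  apply le_antisymm
  · rintro _ ⟨x, rfl⟩
    rw [mulVecLin_apply, vecMulVec_sub_vecMulVec_mulVec]
    exact sub_mem (Submodule.smul_mem _ _ (Submodule.subset_span ⟨0, rfl⟩))
      (Submodule.smul_mem _ _ (Submodule.subset_span ⟨1, rfl⟩))
  · rw [Submodule.span_le, Set.range_subset_iff]
    intro i
    fin_cases i
    · obtain ⟨x, hux, hvx⟩ := exists_dotProduct_eq_of_linearIndependent h 0 1
      exact ⟨x, by rw [mulVecLin_apply, vecMulVec_sub_vecMulVec_mulVec, hux, hvx]; simp⟩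
    · obtain ⟨x, hux, hvx⟩ := exists_dotProduct_eq_of_linearIndependent h (-1) 0
      exact ⟨x, by rw [mulVecLin_apply, vecMulVec_sub_vecMulVec_mulVec, hux, hvx]; simp⟩

theorem rank_vecMulVec_sub_vecMulVec {u v : n → K} (h : LinearIndependent K ![u, v]) :
    (vecMulVec u v - vecMulVec v u).rank = 2 := by
  rw [Matrix.rank, range_mulVecLin_vecMulVec_sub_vecMulVec h, finrank_span_eq_card h,
    Fintype.card_fin]

end Matrix

theorem linearIndependent_one_pair_of_ne {K n : Type*} [Field K] {g : n → K} {a b : n}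
    (h : g a ≠ g b) : LinearIndependent K ![1, g] := by
  rw [LinearIndependent.pair_iff]
  intro s t hst
  have ha := congrFun hst a
  have hb := congrFun hst b
  simp only [Pi.add_apply, Pi.smul_apply, Pi.one_apply, smul_eq_mul, mul_one,
    Pi.zero_apply] at ha hb
  have ht : t = 0 := by
    have : t * (g a - g b) = 0 := by linear_combination ha - hb
    exact (mul_eq_zero.mp this).resolve_right (sub_ne_zero.mpr h)
  subst ht
  simpa using ha

section GenusOne

variable {A : Type*} {d : ℕ}

def wrapIndicator (k : ℕ) (p0 : A ≃ Fin d) : A → ℝ :=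
  fun α => if d - k ≤ (p0 α : ℕ) then 1 else 0

theorem rvGenusOne.exists_val_eq {hd : 0 < d} {p0 p1 : A ≃ Fin d}
    (h : rvGenusOne d hd p0 p1) :
    ∃ k, 1 ≤ k ∧ k < d ∧ ∀ α, (p1 α : ℕ) = ((p0 α : ℕ) + k) % d := by
  have : NeZero d := ⟨hd.ne'⟩
  obtain ⟨k, hk1, hk_le, hk⟩ := h
  have hkd : k < d := by omega
  refine ⟨k, hk1, hkd, fun α => ?_⟩
  have hα := hk (p0 α)
  rw [p0.symm_apply_apply] at hα
  rw [hα, Fin.val_add, Fin.val_natCast, Nat.mod_eq_of_lt hkd]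

theorem rvOmega_eq_vecMulVec_sub_vecMulVec [Fintype A] {k : ℕ} {p0 p1 : A ≃ Fin d}
    (hkd : k < d) (hp1 : ∀ α, (p1 α : ℕ) = ((p0 α : ℕ) + k) % d) :
    rvOmega d p0 p1 =
      vecMulVec 1 (wrapIndicator k p0) - vecMulVec (wrapIndicator k p0) 1 := by
  have hmod : ∀ α, (p1 α : ℕ) =
      if (p0 α : ℕ) + k < d then (p0 α : ℕ) + k else (p0 α : ℕ) + k - d := by
    intro α
    have := (p0 α).isLt
    rw [hp1]
    split_ifs with hlt
    · exact Nat.mod_eq_of_lt hlt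
    · rw [Nat.mod_eq_sub_mod (by omega), Nat.mod_eq_of_lt (by omega)]
  ext α β
  simp only [rvOmega, wrapIndicator, of_apply, Matrix.sub_apply, vecMulVec_apply, Pi.one_apply,
    Fin.lt_def, hmod]
  split_ifs <;> norm_num <;> omega

theorem wrapIndicator_ne (p0 : A ≃ Fin d) {k : ℕ} (hk1 : 1 ≤ k) (hkd : k < d) :
    wrapIndicator k p0 (p0.symm ⟨0, by omega⟩) ≠
      wrapIndicator k p0 (p0.symm ⟨d - 1, by omega⟩) := by
  simp only [wrapIndicator, Equiv.apply_symm_apply]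
  rw [if_neg (by omega), if_pos (by omega)]
  exact zero_ne_one

end GenusOne

/-- For a genus-one combinatorial data `π` on an alphabet with `d ≥ 2`
symbols, the matrix `Ω_π` has rank `2`; equivalently, the kernel of
`Ω_π : ℝ^𝒜 → ℝ^𝒜` has dimension `d − 2` and its image has dimension `2`. -/
theorem stmt14 {A : Type*} [Fintype A] (d : ℕ) (hd : 2 ≤ d)
    (hcard : Fintype.card A = d) (p0 p1 : A ≃ Fin d)
    (hgenus : rvGenusOne d (by omega) p0 p1) :
    (rvOmega d p0 p1).rank = 2 ∧
      Module.finrank ℝ (LinearMap.ker (rvOmega d p0 p1).mulVecLin) = d - 2 ∧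
      Module.finrank ℝ (LinearMap.range (rvOmega d p0 p1).mulVecLin) = 2 := by
  obtain ⟨k, hk1, hkd, hp1⟩ := hgenus.exists_val_eq
  have hind : LinearIndependent ℝ ![1, wrapIndicator k p0] :=
    linearIndependent_one_pair_of_ne (wrapIndicator_ne p0 hk1 hkd)
  have hrank : (rvOmega d p0 p1).rank = 2 := by
    rw [rvOmega_eq_vecMulVec_sub_vecMulVec hkd hp1, rank_vecMulVec_sub_vecMulVec hind]
  have hnullity := LinearMap.finrank_range_add_finrank_ker (rvOmega d p0 p1).mulVecLin
  rw [← Matrix.rank, hrank, Module.finrank_fintype_fun_eq_card, hcard] at hnullity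
  exact ⟨hrank, by omega, hrank⟩
end
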